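/- Under assumptions (i) M ⊥ R | X, G=2, (ii) M ⊥ G | X, and (iii) Y ⊥ R | X, M, G=1, with q(x,m) = 1/p(R=1|X=x,M=m,G=1), for any function h(X,M): E[q(X,M)·R·h(X,M) | G=1] = E[ E[h(X,M) | X, R=1, G=2] | G=1 ]. -/

import Mathlib

open Finset Set Real

noncomputable def Pr {Ω : Type*} [Fintype Ω] (μ : Ω → ℝ) (A : Set Ω) : ℝ :=
  ∑ ω, A.indicator μ ω

noncomputable def cPr {Ω : Type*} [Fintype Ω] (μ : Ω → ℝ) (A B : Set Ω) : ℝ :=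
  Pr μ (A ∩ B) / Pr μ B

noncomputable def cE {Ω : Type*} [Fintype Ω] (μ : Ω → ℝ) (f : Ω → ℝ) (B : Set Ω) : ℝ :=
  (∑ ω, B.indicator (fun ω' => μ ω' * f ω') ω) / Pr μ B

/-!
Both sides equal `E[h(X,M) | G = 1]`. On the left, grouping over the cells of `(X, M, R)`, the
weight `1 / p(R = 1 | X, M, G = 1)` cancels the probability of `R = 1` within each cell of
`(X, M)` (inverse propensity weighting). On the right, grouping over `X = x`, the inner expectation
is `∑ₘ h(x,m) p(m | x, R = 1, G = 2)`, and (i), (ii) give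
`p(m | x, R = 1, G = 2) = p(m | x, G = 2) = p(m | x) = p(m | x, G = 1)`; the chain rule
`p(m | x, G = 1) p(x | G = 1) = p(x, m | G = 1)` then reassembles `E[h(X,M) | G = 1]`.
-/

section DiscreteConditioning

variable {Ω : Type*} [Fintype Ω] {μ : Ω → ℝ}

lemma Pr_nonneg (hμ : ∀ ω, 0 ≤ μ ω) (A : Set Ω) : 0 ≤ Pr μ A :=
  Finset.sum_nonneg fun ω _ => Set.indicator_nonneg (fun ω _ => hμ ω) ω

lemma Pr_mono (hμ : ∀ ω, 0 ≤ μ ω) {A B : Set Ω} (hAB : A ⊆ B) : Pr μ A ≤ Pr μ B :=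
  Finset.sum_le_sum fun ω _ => Set.indicator_le_indicator_of_subset hAB hμ ω

lemma cPr_pos (hμ : ∀ ω, 0 ≤ μ ω) {A B : Set Ω} (hAB : 0 < Pr μ (A ∩ B)) : 0 < cPr μ A B :=
  div_pos hAB (hAB.trans_le (Pr_mono hμ Set.inter_subset_right))

lemma cPr_mul_cPr (hμ : ∀ ω, 0 ≤ μ ω) (A B C : Set Ω) :
    cPr μ A (C ∩ B) * cPr μ C B = cPr μ (A ∩ C) B := by
  unfold cPr
  rw [Set.inter_assoc]
  rcases (Pr_nonneg hμ (C ∩ B)).eq_or_lt with hCB | hCB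
  · have hACB : Pr μ (A ∩ (C ∩ B)) = 0 :=
      le_antisymm (hCB ▸ Pr_mono hμ Set.inter_subset_right) (Pr_nonneg hμ _)
    rw [← hCB, hACB]
    simp
  · exact div_mul_div_cancel₀ hCB.ne'

lemma cPr_inter_eq_of_indep (hμ : ∀ ω, 0 ≤ μ ω) {A B C : Set Ω}
    (hind : cPr μ (A ∩ C) B = cPr μ A B * cPr μ C B) (hCB : 0 < Pr μ (C ∩ B)) :
    cPr μ A (C ∩ B) = cPr μ A B :=
  mul_right_cancel₀ (cPr_pos hμ hCB).ne' ((cPr_mul_cPr hμ A B C).trans hind)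

/-- Read with `A = {M = m}`, `D = {R = 1}`, `Eᵢ = {G = i}`, `F = {X = x}`: assumptions (i) and (ii)
make the law of `M` given `X` the same on `{R = 1, G = 2}` as on `{G = 1}`. -/
lemma cPr_inter_eq_cPr_inter_of_indep (hμ : ∀ ω, 0 ≤ μ ω) {A D E₁ E₂ F : Set Ω}
    (hAD : cPr μ (A ∩ D) (F ∩ E₂) = cPr μ A (F ∩ E₂) * cPr μ D (F ∩ E₂))
    (hAE₁ : cPr μ (A ∩ E₁) F = cPr μ A F * cPr μ E₁ F)
    (hAE₂ : cPr μ (A ∩ E₂) F = cPr μ A F * cPr μ E₂ F)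
    (hD : 0 < Pr μ (F ∩ (D ∩ E₂))) (hE₁ : 0 < Pr μ (F ∩ E₁)) :
    cPr μ A (F ∩ (D ∩ E₂)) = cPr μ A (F ∩ E₁) := by
  rw [Set.inter_left_comm] at hD ⊢
  have hE₂ : 0 < Pr μ (E₂ ∩ F) :=
    hD.trans_le (Pr_mono hμ fun ω hω => ⟨hω.2.2, hω.2.1⟩)
  rw [Set.inter_comm F E₁] at hE₁ ⊢
  calc cPr μ A (D ∩ (F ∩ E₂)) = cPr μ A (F ∩ E₂) := cPr_inter_eq_of_indep hμ hAD hD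
    _ = cPr μ A F := by rw [Set.inter_comm]; exact cPr_inter_eq_of_indep hμ hAE₂ hE₂
    _ = cPr μ A (E₁ ∩ F) := (cPr_inter_eq_of_indep hμ hAE₁ hE₁).symm

lemma cE_eq_sum_mul_cPr {α : Type*} {B : Set Ω} {f : Ω → ℝ} (φ : Ω → α) (F : α → ℝ)
    (t : Finset α) (hf : ∀ ω ∈ B, f ω = F (φ ω)) (ht : ∀ ω ∈ B, φ ω ∈ t) :
    cE μ f B = ∑ a ∈ t, F a * cPr μ {ω | φ ω = a} B := by
  classical
  simp only [cE, cPr, mul_div_assoc', ← Finset.sum_div]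
  congr 1
  simp only [Pr, Finset.mul_sum]
  rw [Finset.sum_comm]
  refine Finset.sum_congr rfl fun ω _ => ?_
  by_cases hω : ω ∈ B
  · simp [Set.indicator_apply, hω, hf ω hω, ht ω hω, mul_comm]
  · simp [hω]

theorem cE_inverse_propensity_weighted {α : Type*} (hμ : ∀ ω, 0 ≤ μ ω)
    (φ : Ω → α) (R : Ω → ℕ) (hR : ∀ ω, R ω = 0 ∨ R ω = 1) (B : Set Ω) (h : α → ℝ)
    (hprop : ∀ a ∈ Set.range φ, cPr μ {ω | R ω = 1} ({ω | φ ω = a} ∩ B) ≠ 0) :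
    cE μ (fun ω => 1 / cPr μ {ω' | R ω' = 1} ({ω' | φ ω' = φ ω} ∩ B) * R ω * h (φ ω)) B =
      cE μ (fun ω => h (φ ω)) B := by
  classical
  have hφ : ∀ ω, φ ω ∈ Finset.univ.image φ := fun ω => mem_image_of_mem φ (Finset.mem_univ ω)
  rw [cE_eq_sum_mul_cPr (fun ω => (φ ω, R ω))
      (fun ar => 1 / cPr μ {ω' | R ω' = 1} ({ω' | φ ω' = ar.1} ∩ B) * ar.2 * h ar.1)
      (Finset.univ.image φ ×ˢ {0, 1}) (fun _ _ => rfl)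
      (fun ω _ => mem_product.2 ⟨hφ ω, by rcases hR ω with hω | hω <;> simp [hω]⟩),
    cE_eq_sum_mul_cPr φ h _ (fun _ _ => rfl) (fun ω _ => hφ ω), sum_product]
  refine sum_congr rfl fun a ha => ?_
  obtain ⟨ω, -, rfl⟩ := mem_image.1 ha
  have hcell : {ω' | (φ ω', R ω') = (φ ω, 1)} = {ω' | R ω' = 1} ∩ {ω' | φ ω' = φ ω} := by
    ext; simp [and_comm]
  have hp := hprop _ ⟨ω, rfl⟩
  rw [sum_pair zero_ne_one, hcell, ← cPr_mul_cPr hμ]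
  field_simp
  ring

theorem cE_cE_eq_of_cPr_eq {β γ : Type*} (hμ : ∀ ω, 0 ≤ μ ω)
    (ψ : Ω → β) (χ : Ω → γ) (h : β → γ → ℝ) (B D : Set Ω)
    (hD : ∀ x ∈ Set.range ψ, ∀ m, cPr μ {ω | χ ω = m} ({ω | ψ ω = x} ∩ D) =
      cPr μ {ω | χ ω = m} ({ω | ψ ω = x} ∩ B)) :
    cE μ (fun ω => cE μ (fun ω' => h (ψ ω') (χ ω')) ({ω' | ψ ω' = ψ ω} ∩ D)) B =
      cE μ (fun ω => h (ψ ω) (χ ω)) B := by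
  classical
  have hψ : ∀ ω, ψ ω ∈ Finset.univ.image ψ := fun ω => mem_image_of_mem ψ (Finset.mem_univ ω)
  have hχ : ∀ ω, χ ω ∈ Finset.univ.image χ := fun ω => mem_image_of_mem χ (Finset.mem_univ ω)
  have inner : ∀ x ∈ Set.range ψ, cE μ (fun ω' => h (ψ ω') (χ ω')) ({ω' | ψ ω' = x} ∩ D) =
      ∑ m ∈ Finset.univ.image χ, h x m * cPr μ {ω | χ ω = m} ({ω | ψ ω = x} ∩ B) := by
    intro x hx
    rw [cE_eq_sum_mul_cPr χ (h x) _ (fun ω hω => by rw [hω.1]) (fun ω _ => hχ ω)]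
    exact sum_congr rfl fun m _ => by rw [hD x hx m]
  rw [cE_eq_sum_mul_cPr ψ (fun x => cE μ (fun ω' => h (ψ ω') (χ ω')) ({ω' | ψ ω' = x} ∩ D))
      _ (fun _ _ => rfl) (fun ω _ => hψ ω),
    cE_eq_sum_mul_cPr (fun ω => (ψ ω, χ ω)) (fun p => h p.1 p.2)
      (Finset.univ.image ψ ×ˢ Finset.univ.image χ) (fun _ _ => rfl)
      (fun ω _ => mem_product.2 ⟨hψ ω, hχ ω⟩),
    sum_product]
  refine sum_congr rfl fun x hx => ?_
  obtain ⟨ω, -, rfl⟩ := mem_image.1 hx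
  rw [inner _ ⟨ω, rfl⟩, sum_mul]
  refine sum_congr rfl fun m _ => ?_
  have hcell : {ω' | (ψ ω', χ ω') = (ψ ω, m)} = {ω' | χ ω' = m} ∩ {ω' | ψ ω' = ψ ω} := by
    ext; simp [and_comm]
  rw [mul_assoc, cPr_mul_cPr hμ, hcell]

end DiscreteConditioning

theorem stmt13_general
    {Ω 𝓧 𝓜 : Type*} [Fintype Ω]
    (μ : Ω → ℝ) (X : Ω → 𝓧) (M : Ω → 𝓜) (Y : Ω → ℝ) (R G : Ω → ℕ)
    (h : 𝓧 → 𝓜 → ℝ)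
    (hμ0 : ∀ ω, 0 ≤ μ ω)
    (hR : ∀ ω, R ω = 0 ∨ R ω = 1)
    (hpos : ∀ x ∈ Set.range X, ∀ m ∈ Set.range M, ∀ y ∈ Set.range Y, ∀ r g : ℕ,
      (r = 0 ∨ r = 1) → (g = 1 ∨ g = 2) →
      0 < Pr μ {ω | X ω = x ∧ M ω = m ∧ Y ω = y ∧ R ω = r ∧ G ω = g})
    (hMAR : ∀ (m : 𝓜) (r : ℕ) (x : 𝓧),
      0 < Pr μ {ω | X ω = x ∧ G ω = 2} →
      cPr μ {ω | M ω = m ∧ R ω = r} {ω | X ω = x ∧ G ω = 2} =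
        cPr μ {ω | M ω = m} {ω | X ω = x ∧ G ω = 2} *
        cPr μ {ω | R ω = r} {ω | X ω = x ∧ G ω = 2})
    (hSel : ∀ (m : 𝓜) (g : ℕ) (x : 𝓧),
      0 < Pr μ {ω | X ω = x} →
      cPr μ {ω | M ω = m ∧ G ω = g} {ω | X ω = x} =
        cPr μ {ω | M ω = m} {ω | X ω = x} * cPr μ {ω | G ω = g} {ω | X ω = x})
 :
    cE μ (fun ω =>
        (1 / cPr μ {ω' | R ω' = 1} {ω' | X ω' = X ω ∧ M ω' = M ω ∧ G ω' = 1}) * (R ω : ℝ) *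
          h (X ω) (M ω))
      {ω | G ω = 1} =
    cE μ (fun ω =>
        cE μ (fun ω' => h (X ω') (M ω')) {ω' | X ω' = X ω ∧ R ω' = 1 ∧ G ω' = 2})
      {ω | G ω = 1} := by
  have hcell : ∀ ω g, (g = 1 ∨ g = 2) → ∀ S : Set Ω,
      {ω' | X ω' = X ω ∧ M ω' = M ω ∧ Y ω' = Y ω ∧ R ω' = 1 ∧ G ω' = g} ⊆ S → 0 < Pr μ S :=
    fun ω g hg S hS =>
      (hpos _ ⟨ω, rfl⟩ _ ⟨ω, rfl⟩ _ ⟨ω, rfl⟩ 1 g (by simp) hg).trans_le (Pr_mono hμ0 hS)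
  have hprop : ∀ a ∈ Set.range (fun ω => (X ω, M ω)),
      cPr μ {ω | R ω = 1} ({ω | (X ω, M ω) = a} ∩ {ω | G ω = 1}) ≠ 0 := by
    rintro _ ⟨ω, rfl⟩
    exact (cPr_pos hμ0 (hcell ω 1 (by simp) _ (by intro; simp_all))).ne'
  have hmed : ∀ x ∈ Set.range X, ∀ m,
      cPr μ {ω | M ω = m} ({ω | X ω = x} ∩ {ω | R ω = 1 ∧ G ω = 2}) =
        cPr μ {ω | M ω = m} ({ω | X ω = x} ∩ {ω | G ω = 1}) := by
    rintro _ ⟨ω, rfl⟩ m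
    have hX : 0 < Pr μ {ω' | X ω' = X ω} := hcell ω 1 (by simp) _ fun _ hω => hω.1
    exact cPr_inter_eq_cPr_inter_of_indep hμ0
      (hMAR m 1 _ (hcell ω 2 (by simp) _ fun _ ⟨hX, _, _, _, hG⟩ => ⟨hX, hG⟩))
      (hSel m 1 _ hX) (hSel m 2 _ hX)
      (hcell ω 2 (by simp) _ fun _ ⟨hX, _, _, hR, hG⟩ => ⟨hX, hR, hG⟩)
      (hcell ω 1 (by simp) _ fun _ ⟨hX, _, _, _, hG⟩ => ⟨hX, hG⟩)
  calc _ = cE μ (fun ω => h (X ω) (M ω)) {ω | G ω = 1} := by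
        have hipw := cE_inverse_propensity_weighted hμ0 (fun ω => (X ω, M ω)) R hR
          {ω | G ω = 1} (Function.uncurry h) hprop
        simpa only [Prod.mk.injEq, Function.uncurry_apply_pair, ← Set.ofPred_and, and_assoc]
          using hipw
    _ = _ := (cE_cE_eq_of_cPr_eq hμ0 X M h _ _ hmed).symm

theorem stmt13
    {Ω 𝓧 𝓜 : Type*} [Fintype Ω]
    (μ : Ω → ℝ) (X : Ω → 𝓧) (M : Ω → 𝓜) (Y : Ω → ℝ) (R G : Ω → ℕ)
    (h : 𝓧 → 𝓜 → ℝ)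
    (hμ0 : ∀ ω, 0 ≤ μ ω) (hμ1 : ∑ ω, μ ω = 1)
    (hR : ∀ ω, R ω = 0 ∨ R ω = 1)
    (hG : ∀ ω, G ω = 1 ∨ G ω = 2)
    (hpos : ∀ x ∈ Set.range X, ∀ m ∈ Set.range M, ∀ y ∈ Set.range Y, ∀ r g : ℕ,
      (r = 0 ∨ r = 1) → (g = 1 ∨ g = 2) →
      0 < Pr μ {ω | X ω = x ∧ M ω = m ∧ Y ω = y ∧ R ω = r ∧ G ω = g})
    (hMAR : ∀ (m : 𝓜) (r : ℕ) (x : 𝓧),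
      0 < Pr μ {ω | X ω = x ∧ G ω = 2} →
      cPr μ {ω | M ω = m ∧ R ω = r} {ω | X ω = x ∧ G ω = 2} =
        cPr μ {ω | M ω = m} {ω | X ω = x ∧ G ω = 2} *
        cPr μ {ω | R ω = r} {ω | X ω = x ∧ G ω = 2})
    (hSel : ∀ (m : 𝓜) (g : ℕ) (x : 𝓧),
      0 < Pr μ {ω | X ω = x} →
      cPr μ {ω | M ω = m ∧ G ω = g} {ω | X ω = x} =
        cPr μ {ω | M ω = m} {ω | X ω = x} * cPr μ {ω | G ω = g} {ω | X ω = x})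
    (hCI : ∀ (y : ℝ) (r : ℕ) (x : 𝓧) (m : 𝓜),
      0 < Pr μ {ω | X ω = x ∧ M ω = m ∧ G ω = 1} →
      cPr μ {ω | Y ω = y ∧ R ω = r} {ω | X ω = x ∧ M ω = m ∧ G ω = 1} =
        cPr μ {ω | Y ω = y} {ω | X ω = x ∧ M ω = m ∧ G ω = 1} *
        cPr μ {ω | R ω = r} {ω | X ω = x ∧ M ω = m ∧ G ω = 1})
 :
    cE μ (fun ω =>
        (1 / cPr μ {ω' | R ω' = 1} {ω' | X ω' = X ω ∧ M ω' = M ω ∧ G ω' = 1}) * (R ω : ℝ) *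
          h (X ω) (M ω))
      {ω | G ω = 1} =
    cE μ (fun ω =>
        cE μ (fun ω' => h (X ω') (M ω')) {ω' | X ω' = X ω ∧ R ω' = 1 ∧ G ω' = 2})
      {ω | G ω = 1} :=
  stmt13_general μ X M Y R G h hμ0 hR hpos hMAR hSel
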